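/- arXiv:0904.0077 — 6 statements merged into one kernel-verified Lean document; each statement's English description precedes it below -/
import Mathlib

section
/- If S is an AG-groupoid (a groupoid satisfying the left invertive law (ab)c = (cb)a), then the set F(S) of all fuzzy subsets of S, equipped with the convolution product (f∘g)(x) = sup over x=yz of min(f(y), g(z)) (and 0 if x is not a product), is itself an AG-groupoid, i.e., (f∘g)∘h = (h∘g)∘f for all fuzzy subsets f, g, h. -/
open unitInterval

instance : Fact ((0:ℝ) ≤ 1) := ⟨zero_le_one⟩

/-- Convolution product of fuzzy subsets: (f∘g)(x) = sup over x = y*z of min (f y) (g z),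
with value 0 (= ⊥) if x has no factorization. -/
noncomputable def conv {S : Type*} [Mul S] (f g : S → I) : S → I :=
  fun x => ⨆ p : {p : S × S // p.1 * p.2 = x}, f p.1.1 ⊓ g p.1.2

lemma conv_conv_apply {S : Type*} [Mul S] (f g h : S → I) (x : S) :
    conv (conv f g) h x =
      ⨆ t : {t : S × S × S // t.1 * t.2.1 * t.2.2 = x}, f t.1.1 ⊓ g t.1.2.1 ⊓ h t.1.2.2 := by
  apply le_antisymm
  · refine iSup_le fun ⟨⟨u, c⟩, huc⟩ => ?_
    rw [conv, iSup_inf_eq]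
    refine iSup_le fun ⟨⟨a, b⟩, hab⟩ => ?_
    exact le_iSup_of_le ⟨⟨a, b, c⟩, by simp [hab, huc]⟩ le_rfl
  · refine iSup_le fun ⟨⟨a, b, c⟩, habc⟩ => ?_
    refine le_iSup_of_le ⟨⟨a * b, c⟩, habc⟩ ?_
    exact inf_le_inf_right _ (le_iSup_of_le (⟨⟨a, b⟩, rfl⟩ : {p : S × S // p.1 * p.2 = a * b}) le_rfl)

def swapOuter (S : Type*) : Equiv.Perm (S × S × S) :=
  Function.Involutive.toPerm (fun t => (t.2.2, t.2.1, t.1)) fun _ => rfl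

theorem stmt0 {S : Type*} [Mul S]
    (hli : ∀ a b c : S, (a * b) * c = (c * b) * a)
    (f g h : S → I) :
    conv (conv f g) h = conv (conv h g) f := by
  funext x
  rw [conv_conv_apply, conv_conv_apply]
  -- the left invertive law says exactly that `swapOuter` maps factorizations of `x` to factorizations
  refine Equiv.iSup_congr ((swapOuter S).subtypeEquiv fun t => by rw [hli]; rfl)
    fun ⟨⟨a, b, c⟩, _⟩ => show h c ⊓ g b ⊓ f a = f a ⊓ g b ⊓ h c by ac_rfl
end

section
/- If S is an AG-groupoid with left identity e (ex = x for all x), then f∘(g∘h) = g∘(f∘h) for all fuzzy subsets f, g, h of S. -/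
open unitInterval

/-!
The left invertive law yields the medial law (ab)(cd) = (ac)(bd); inserting the left identity,
a(bc) = (ea)(bc) = (eb)(ac) = b(ac). Under this law the factorization x = y(uv) turns into
x = u(yv), which matches each term of the supremum defining f∘(g∘h) with one of g∘(f∘h).
-/

section

variable {S : Type*} [Mul S]

theorem mul_mul_mul_comm_of_left_invertive (hli : ∀ a b c : S, (a * b) * c = (c * b) * a)
    (a b c d : S) : (a * b) * (c * d) = (a * c) * (b * d) :=
  calc (a * b) * (c * d) = ((c * d) * b) * a := hli _ _ _
    _ = ((b * d) * c) * a := by rw [hli c d b]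
    _ = (a * c) * (b * d) := hli _ _ _

theorem mul_left_comm_of_left_invertive (hli : ∀ a b c : S, (a * b) * c = (c * b) * a)
    (e : S) (he : ∀ x : S, e * x = x) (a b c : S) : a * (b * c) = b * (a * c) :=
  calc a * (b * c) = (e * a) * (b * c) := by rw [he]
    _ = (e * b) * (a * c) := mul_mul_mul_comm_of_left_invertive hli _ _ _ _
    _ = b * (a * c) := by rw [he]

theorem inf_le_conv (f g : S → I) (y z : S) : f y ⊓ g z ≤ conv f g (y * z) :=
  le_iSup (fun p : {p : S × S // p.1 * p.2 = y * z} => f p.1.1 ⊓ g p.1.2) ⟨(y, z), rfl⟩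

theorem conv_conv_le_of_mul_left_comm (hcomm : ∀ a b c : S, a * (b * c) = b * (a * c))
    (f g h : S → I) (x : S) : conv f (conv g h) x ≤ conv g (conv f h) x := by
  refine iSup_le fun ⟨⟨y, z⟩, hyz⟩ => ?_
  refine (inf_iSup_eq _ _).trans_le (iSup_le fun ⟨⟨u, v⟩, huv⟩ => ?_)
  dsimp only at hyz huv ⊢
  subst hyz huv
  calc f y ⊓ (g u ⊓ h v) = g u ⊓ (f y ⊓ h v) := inf_left_comm _ _ _
    _ ≤ g u ⊓ conv f h (y * v) := inf_le_inf_left _ (inf_le_conv f h y v)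
    _ ≤ conv g (conv f h) (u * (y * v)) := inf_le_conv g (conv f h) u (y * v)
    _ = conv g (conv f h) (y * (u * v)) := by rw [hcomm]

theorem conv_left_comm_of_mul_left_comm (hcomm : ∀ a b c : S, a * (b * c) = b * (a * c))
    (f g h : S → I) : conv f (conv g h) = conv g (conv f h) :=
  funext fun x => le_antisymm (conv_conv_le_of_mul_left_comm hcomm f g h x)
    (conv_conv_le_of_mul_left_comm hcomm g f h x)

end

theorem stmt2 {S : Type*} [Mul S]
    (hli : ∀ a b c : S, (a * b) * c = (c * b) * a)
    (e : S) (he : ∀ x : S, e * x = x)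
    (f g h : S → I) :
    conv f (conv g h) = conv g (conv f h) :=
  conv_left_comm_of_mul_left_comm (mul_left_comm_of_left_invertive hli e he) f g h
end

section
/- An AG-groupoid S with F(S) = (F(S))² (every fuzzy subset is a product of two fuzzy subsets) is a commutative semigroup if and only if (f∘g)∘h = f∘(h∘g) holds for all fuzzy subsets f, g, h of S. -/
/-!
Both sides of `(f∘g)∘h = f∘(h∘g)` are suprema over factorizations `x = (yz)v`, resp.
`x = y(vz)`, of `f y ⊓ g z ⊓ h v`, so the fuzzy identity is equivalent to the pointwise
identity `(ab)c = a(cb)` (test it on characteristic functions of points for the converse).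
`F(S) = F(S)²` applied to the constant function `1` makes every element a product `x = vu`;
then `ab = a(vu) = (au)v = (vu)a = ba` by the pointwise identity and left invertivity, and
associativity follows from commutativity and left invertivity.
-/

open unitInterval

open Classical in
noncomputable def pointIndicator {S : Type*} (a : S) : S → I := fun x => if x = a then ⊤ else ⊥

theorem pointIndicator_injective {S : Type*} : Function.Injective (pointIndicator (S := S)) := by
  intro a b hab
  simpa [pointIndicator] using congrFun hab a

section Convolution

variable {S : Type*} [Mul S]

theorem conv_apply_le_iff {f g : S → I} {x : S} {t : I} :
    conv f g x ≤ t ↔ ∀ y z, y * z = x → f y ⊓ g z ≤ t := by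
  simp only [conv, iSup_le_iff, Subtype.forall, Prod.forall]

theorem conv_conv_apply_le_iff {f g h : S → I} {x : S} {t : I} :
    conv (conv f g) h x ≤ t ↔ ∀ y z v, y * z * v = x → f y ⊓ g z ⊓ h v ≤ t := by
  simp only [conv, iSup_inf_eq, iSup_le_iff, Subtype.forall, Prod.forall]
  exact ⟨fun H y z v hx => H _ v hx y z rfl, fun H w v hx y z hw => H y z v (hw ▸ hx)⟩

theorem conv_conv_apply_le_iff' {f g h : S → I} {x : S} {t : I} :
    conv f (conv g h) x ≤ t ↔ ∀ y v z, y * (v * z) = x → f y ⊓ (g v ⊓ h z) ≤ t := by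
  simp only [conv, inf_iSup_eq, iSup_le_iff, Subtype.forall, Prod.forall]
  exact ⟨fun H y v z hx => H y _ hx v z rfl, fun H y w hx v z hw => H y v z (hw ▸ hx)⟩

theorem conv_conv_eq_conv_conv_of_mul_mul {f g h : S → I}
    (hS : ∀ a b c : S, a * b * c = a * (c * b)) :
    conv (conv f g) h = conv f (conv h g) := by
  funext x
  refine eq_of_forall_ge_iff fun t => ?_
  rw [conv_conv_apply_le_iff, conv_conv_apply_le_iff']
  simp only [hS, inf_assoc, inf_comm (g _)]
  exact ⟨fun H y v z => H y z v, fun H y z v => H y v z⟩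

theorem conv_pointIndicator (a b : S) :
    conv (pointIndicator a) (pointIndicator b) = pointIndicator (a * b) := by
  funext x
  refine eq_of_forall_ge_iff fun t => ?_
  rw [conv_apply_le_iff]
  simp only [pointIndicator]
  constructor
  · intro H
    split_ifs with hx
    · simpa using H a b hx.symm
    · exact bot_le
  · rintro H y z rfl
    split_ifs at H ⊢ <;> simp_all

theorem mul_mul_of_conv_conv_eq_conv_conv
    (hC : ∀ f g h : S → I, conv (conv f g) h = conv f (conv h g)) (a b c : S) :
    a * b * c = a * (c * b) :=
  pointIndicator_injective <| by
    simpa only [conv_pointIndicator] using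
      hC (pointIndicator a) (pointIndicator b) (pointIndicator c)

theorem conv_conv_eq_conv_conv_iff :
    (∀ f g h : S → I, conv (conv f g) h = conv f (conv h g)) ↔
      ∀ a b c : S, a * b * c = a * (c * b) :=
  ⟨mul_mul_of_conv_conv_eq_conv_conv, fun hS _ _ _ => conv_conv_eq_conv_conv_of_mul_mul hS⟩

theorem exists_mul_eq_of_forall_eq_conv (hsq : ∀ f : S → I, ∃ h k : S → I, f = conv h k)
    (x : S) : ∃ y z : S, y * z = x := by
  obtain ⟨h, k, hone⟩ := hsq fun _ => ⊤
  by_contra! hx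
  have : conv h k x ≤ ⊥ := conv_apply_le_iff.2 fun y z hyz => absurd hyz (hx y z)
  rw [← hone] at this
  exact top_ne_bot (le_bot_iff.1 this)

end Convolution

section LeftInvertive

variable {S : Type*} [Mul S]

theorem mul_comm_of_mul_mul_eq (hli : ∀ a b c : S, a * b * c = c * b * a)
    (hsurj : ∀ x : S, ∃ y z : S, y * z = x) (hS : ∀ a b c : S, a * b * c = a * (c * b))
    (a b : S) : a * b = b * a := by
  obtain ⟨v, u, rfl⟩ := hsurj b
  calc a * (v * u) = a * u * v := (hS a u v).symm
    _ = v * u * a := hli a u v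

theorem mul_comm_and_assoc_iff_mul_mul_eq (hli : ∀ a b c : S, a * b * c = c * b * a)
    (hsurj : ∀ x : S, ∃ y z : S, y * z = x) :
    ((∀ a b : S, a * b = b * a) ∧ ∀ a b c : S, a * b * c = a * (b * c)) ↔
      ∀ a b c : S, a * b * c = a * (c * b) := by
  constructor
  · rintro ⟨hcomm, hassoc⟩ a b c
    rw [hassoc, hcomm b]
  · intro hS
    have hcomm := mul_comm_of_mul_mul_eq hli hsurj hS
    exact ⟨hcomm, fun a b c => by rw [hli, hcomm (c * b), hcomm c]⟩

end LeftInvertive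

theorem stmt4 {S : Type*} [Mul S]
    (hli : ∀ a b c : S, (a * b) * c = (c * b) * a)
    (hsq : ∀ f : S → I, ∃ h k : S → I, f = conv h k) :
    ((∀ a b : S, a * b = b * a) ∧ (∀ a b c : S, (a * b) * c = a * (b * c))) ↔
      (∀ f g h : S → I, conv (conv f g) h = conv f (conv h g)) := by
  rw [conv_conv_eq_conv_conv_iff]
  exact mul_comm_and_assoc_iff_mul_mul_eq hli (exists_mul_eq_of_forall_eq_conv hsq)
end

section
/- In an AG-groupoid S, every fuzzy left ideal f that is idempotent (f∘f = f) is also a fuzzy right ideal (hence a fuzzy two-sided ideal), i.e., f∘S ⊆ f. -/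
/-!
In an AG-groupoid a product `(a * b) * z` can be rewritten as `(z * b) * a` by the left
invertive law, so every factor `a` of an element `a * b` is also a right factor of
`(a * b) * z`. For a fuzzy left ideal this gives `f a ≤ f ((a * b) * z)`, and idempotency
`f = f ∘ f` turns this into `f y ≤ f (y * z)`, which is the right ideal property.
-/

open unitInterval

section Conv

variable {S : Type*} [Mul S]

theorem conv_le_iff {f g h : S → I} :
    conv f g ≤ h ↔ ∀ a b, f a ⊓ g b ≤ h (a * b) := by
  refine ⟨fun H a b => ?_, fun H x => iSup_le fun ⟨⟨a, b⟩, hab⟩ => hab ▸ H a b⟩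
  exact (le_iSup (fun p : {p : S × S // p.1 * p.2 = a * b} => f p.1.1 ⊓ g p.1.2)
    ⟨(a, b), rfl⟩).trans (H (a * b))

theorem conv_const_one_left_le_iff {f : S → I} :
    conv (fun _ => 1) f ≤ f ↔ ∀ a b, f b ≤ f (a * b) := by
  simp only [conv_le_iff, inf_of_le_right le_one']

theorem conv_const_one_right_le_iff {f : S → I} :
    conv f (fun _ => 1) ≤ f ↔ ∀ a b, f a ≤ f (a * b) := by
  simp only [conv_le_iff, inf_of_le_left le_one']

theorem conv_self_le_mul_right_of_left_invertive
    (hli : ∀ a b c : S, (a * b) * c = (c * b) * a) {f : S → I}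
    (hleft : conv (fun _ => 1) f ≤ f) (z : S) :
    conv f f ≤ fun y => f (y * z) :=
  conv_le_iff.2 fun a b => calc
    f a ⊓ f b ≤ f a := inf_le_left
    _ ≤ f ((z * b) * a) := conv_const_one_left_le_iff.1 hleft _ _
    _ = f ((a * b) * z) := by rw [hli]

end Conv

theorem stmt11 {S : Type*} [Mul S]
    (hli : ∀ a b c : S, (a * b) * c = (c * b) * a)
    (f : S → I) (hleft : conv (fun _ => (1 : I)) f ≤ f) (hidem : conv f f = f) :
    conv f (fun _ => (1 : I)) ≤ f := by
  refine conv_const_one_right_le_iff.2 fun y z => ?_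
  calc f y = conv f f y := (congrFun hidem y).symm
    _ ≤ f (y * z) := conv_self_le_mul_right_of_left_invertive hli hleft z y
end

section
/- Let f and g be fuzzy right ideals of an AG-groupoid S with left identity. Then f∘g is a fuzzy bi-ideal of S, i.e., f∘g is a fuzzy AG-subgroupoid and ((f∘g)∘S)∘(f∘g) ⊆ f∘g. -/
open unitInterval

/-!
Identities of `S` between products of four elements lift to inequalities between the
corresponding convolution products of fuzzy subsets. In an AG-groupoid with left identity the
medial law `(ab)(cd) = (ac)(bd)` and the identity `(ws)(rt) = ((rw)s)t` thus give
`(f∘g)∘(f∘g) ≤ (f∘S)∘(g∘S)` and `((f∘g)∘S)∘(f∘g) ≤ ((f∘S)∘S)∘g`, and both right sides are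
`≤ f∘g` because `f` and `g` are right ideals.
-/

/-- `S` is an AG-groupoid. -/
def IsLeftInvertive (S : Type*) [Mul S] : Prop :=
  ∀ a b c : S, a * b * c = c * b * a

namespace IsLeftInvertive

variable {S : Type*} [Mul S]

theorem mul_mul_mul_comm (hS : IsLeftInvertive S) (a b c d : S) :
    a * b * (c * d) = a * c * (b * d) := by
  rw [hS a b (c * d), hS c d b, hS (b * d) c a]

theorem mul_left_comm (hS : IsLeftInvertive S) {e : S} (he : ∀ x, e * x = x) (a b c : S) :
    a * (b * c) = b * (a * c) := by
  simpa only [he] using hS.mul_mul_mul_comm e a b c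

theorem mul_mul_mul_eq_mul_mul_mul (hS : IsLeftInvertive S) {e : S} (he : ∀ x, e * x = x)
    (w s r t : S) : w * s * (r * t) = r * w * s * t :=
  calc w * s * (r * t) = r * (w * s * t) := hS.mul_left_comm he _ _ _
    _ = r * (t * s * w) := by rw [hS]
    _ = t * s * (r * w) := hS.mul_left_comm he _ _ _
    _ = r * w * s * t := (hS _ _ _).symm

end IsLeftInvertive

section Convolution

variable {S : Type*} [Mul S]

theorem le_conv_mul (F G : S → I) (u v : S) : F u ⊓ G v ≤ conv F G (u * v) :=
  le_iSup (fun p : {p : S × S // p.1 * p.2 = u * v} => F p.1.1 ⊓ G p.1.2) ⟨(u, v), rfl⟩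

theorem conv_le_iff_s16 {F G H : S → I} : conv F G ≤ H ↔ ∀ u v, F u ⊓ G v ≤ H (u * v) := by
  refine ⟨fun h u v => (le_conv_mul F G u v).trans (h _), fun h x => iSup_le ?_⟩
  rintro ⟨⟨u, v⟩, rfl⟩
  exact h u v

theorem conv_mono {F F' G G' : S → I} (hF : F ≤ F') (hG : G ≤ G') : conv F G ≤ conv F' G' :=
  conv_le_iff_s16.2 fun u v => (inf_le_inf (hF u) (hG v)).trans (le_conv_mul F' G' u v)

theorem conv_conv_conv_le {A B C D H : S → I}
    (h : ∀ a b c d, A a ⊓ B b ⊓ (C c ⊓ D d) ≤ H (a * b * (c * d))) :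
    conv (conv A B) (conv C D) ≤ H := by
  refine conv_le_iff_s16.2 fun u v => ?_
  rw [conv, conv, iSup_inf_iSup]
  refine iSup_le ?_
  rintro ⟨⟨⟨a, b⟩, rfl⟩, ⟨⟨c, d⟩, rfl⟩⟩
  exact h a b c d

theorem conv_conv_conv_le_conv_conv_conv_comm {A B C D : S → I}
    (h : ∀ a b c d : S, a * b * (c * d) = a * c * (b * d)) :
    conv (conv A B) (conv C D) ≤ conv (conv A C) (conv B D) :=
  conv_conv_conv_le fun a b c d => by
    rw [h, inf_inf_inf_comm]
    exact (inf_le_inf (le_conv_mul A C a c) (le_conv_mul B D b d)).trans (le_conv_mul _ _ _ _)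

theorem conv_conv_conv_le_conv_conv_conv {A B C D : S → I}
    (h : ∀ w s r t : S, w * s * (r * t) = r * w * s * t) :
    conv (conv A B) (conv C D) ≤ conv (conv (conv C A) B) D :=
  conv_conv_conv_le fun a b c d => by
    rw [h]
    calc A a ⊓ B b ⊓ (C c ⊓ D d) = C c ⊓ A a ⊓ B b ⊓ D d := by ac_rfl
      _ ≤ conv C A (c * a) ⊓ B b ⊓ D d := by gcongr; exact le_conv_mul C A c a
      _ ≤ conv (conv C A) B (c * a * b) ⊓ D d := by gcongr; exact le_conv_mul _ B _ b
      _ ≤ conv (conv (conv C A) B) D (c * a * b * d) := le_conv_mul _ D _ d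

theorem conv_le_conv_one (F G : S → I) : conv F G ≤ conv F (fun _ => 1) :=
  conv_mono le_rfl fun _ => le_one'

end Convolution

theorem stmt16 {S : Type*} [Mul S]
    (hli : ∀ a b c : S, (a * b) * c = (c * b) * a)
    (e : S) (he : ∀ x : S, e * x = x)
    (f g : S → I)
    (hf : conv f (fun _ => (1 : I)) ≤ f) (hg : conv g (fun _ => (1 : I)) ≤ g) :
    conv (conv f g) (conv f g) ≤ conv f g ∧
      conv (conv (conv f g) (fun _ => (1 : I))) (conv f g) ≤ conv f g := by
  have hS : IsLeftInvertive S := hli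
  constructor
  · calc conv (conv f g) (conv f g) ≤ conv (conv f f) (conv g g) :=
          conv_conv_conv_le_conv_conv_conv_comm hS.mul_mul_mul_comm
      _ ≤ conv (conv f fun _ => 1) (conv g fun _ => 1) :=
          conv_mono (conv_le_conv_one f f) (conv_le_conv_one g g)
      _ ≤ conv f g := conv_mono hf hg
  · calc conv (conv (conv f g) fun _ => 1) (conv f g)
          ≤ conv (conv (conv f (conv f g)) fun _ => 1) g :=
          conv_conv_conv_le_conv_conv_conv (hS.mul_mul_mul_eq_mul_mul_mul he)
      _ ≤ conv (conv (conv f fun _ => 1) fun _ => 1) g :=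
          conv_mono (conv_mono (conv_le_conv_one f _) le_rfl) le_rfl
      _ ≤ conv f g := conv_mono ((conv_mono hf le_rfl).trans hf) le_rfl
end

section
/- A fuzzy subset f of an AG-groupoid S with left identity is a fuzzy right ideal (f(xy) ≥ f(x) for all x,y) if and only if f is a fuzzy interior ideal (f((xa)y) ≥ f(a) for all x,a,y). -/
/-!
With a left identity `e`, the left invertive law `(a * b) * c = (c * b) * a` gives
`x * a = (e * x) * a = (a * x) * e`, so a fuzzy right ideal is also a fuzzy left ideal, and
`f a ≤ f (x * a) ≤ f ((x * a) * y)`. Conversely `x * y = (e * x) * y`, so an interior ideal is a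
right ideal.
-/

open unitInterval

section FuzzyIdeal

variable {S α : Type*} [Mul S] [Preorder α]

def IsFuzzyRightIdeal (f : S → α) : Prop := ∀ x y : S, f x ≤ f (x * y)

def IsFuzzyLeftIdeal (f : S → α) : Prop := ∀ x y : S, f y ≤ f (x * y)

def IsFuzzyInteriorIdeal (f : S → α) : Prop := ∀ x a y : S, f a ≤ f ((x * a) * y)

theorem mul_eq_mul_mul_of_leftInvertive (hli : ∀ a b c : S, (a * b) * c = (c * b) * a)
    {e : S} (he : ∀ x : S, e * x = x) (x a : S) : x * a = (a * x) * e := by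
  rw [hli a x e, he]

theorem IsFuzzyRightIdeal.isFuzzyLeftIdeal (hli : ∀ a b c : S, (a * b) * c = (c * b) * a)
    {e : S} (he : ∀ x : S, e * x = x) {f : S → α} (hf : IsFuzzyRightIdeal f) :
    IsFuzzyLeftIdeal f := fun x a => by
  rw [mul_eq_mul_mul_of_leftInvertive hli he x a]
  exact (hf a x).trans (hf (a * x) e)

theorem IsFuzzyRightIdeal.isFuzzyInteriorIdeal (hli : ∀ a b c : S, (a * b) * c = (c * b) * a)
    {e : S} (he : ∀ x : S, e * x = x) {f : S → α} (hf : IsFuzzyRightIdeal f) :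
    IsFuzzyInteriorIdeal f := fun x a y =>
  (hf.isFuzzyLeftIdeal hli he x a).trans (hf (x * a) y)

theorem IsFuzzyInteriorIdeal.isFuzzyRightIdeal {e : S} (he : ∀ x : S, e * x = x) {f : S → α}
    (hf : IsFuzzyInteriorIdeal f) : IsFuzzyRightIdeal f := fun x y => by
  simpa only [he] using hf e x y

end FuzzyIdeal

theorem stmt17 {S : Type*} [Mul S]
    (hli : ∀ a b c : S, (a * b) * c = (c * b) * a)
    (e : S) (he : ∀ x : S, e * x = x)
    (f : S → I) :
    (∀ x y : S, f x ≤ f (x * y)) ↔ (∀ x a y : S, f a ≤ f ((x * a) * y)) :=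
  ⟨IsFuzzyRightIdeal.isFuzzyInteriorIdeal hli he, IsFuzzyInteriorIdeal.isFuzzyRightIdeal he⟩
end
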